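/- Let (X₁,Y₁) and (X₂,Y₂) be i.i.d. pairs with X₁ uniform on {0,1} and Y₁ finite-valued. Then Z(X₁+X₂ | Y₁, Y₂) ≥ Z(X₁|Y₁), where addition is mod 2. -/

import Mathlib

/-!
Fix outputs `y₁, y₂` and write `a, b = p 0 y₁, p 1 y₁` and `c, d = p 0 y₂, p 1 y₂`. The term of
`Z(X₁ + X₂ | Y₁, Y₂)` at `(y₁, y₂)` is `√((ac + bd)(ad + bc))` (up to the factors `2`), and
`(ac + bd)(ad + bc) - (a + b)²cd = ab(c - d)² ≥ 0`. Hence it dominates `(a + b)√(cd)`, and summing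
over `y₁` and `y₂` gives `(∑ p) · Z(X₁|Y₁) ≤ Z(X₁ + X₂ | Y₁, Y₂)`.
-/

open Finset

/-- Bhattacharyya parameter `Z(X|Y) = ∑_y √(P(y|0)·P(y|1))` for `X` uniform on `{0,1}`
with joint pmf `p` (so `P(y|x) = 2·p x y`). -/
noncomputable def bhat {β : Type} [Fintype β] (p : Bool → β → ℝ) : ℝ :=
  ∑ y : β, Real.sqrt ((2 * p false y) * (2 * p true y))

noncomputable def xorConv {β : Type} (p : Bool → β → ℝ) : Bool → β × β → ℝ :=
  fun s yy => ∑ x₁ : Bool, p x₁ yy.1 * p (xor s x₁) yy.2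

lemma add_mul_sqrt_mul_le_sqrt {a b c d : ℝ} (ha : 0 ≤ a) (hb : 0 ≤ b) :
    (a + b) * √(c * d) ≤ √((a * c + b * d) * (a * d + b * c)) :=
  calc (a + b) * √(c * d) = √((a + b) ^ 2 * (c * d)) := by
        rw [Real.sqrt_mul (sq_nonneg _), Real.sqrt_sq (add_nonneg ha hb)]
    _ ≤ √((a * c + b * d) * (a * d + b * c)) :=
        Real.sqrt_le_sqrt (by nlinarith [mul_nonneg (mul_nonneg ha hb) (sq_nonneg (c - d))])

lemma sum_mul_bhat_le_bhat_xorConv {β : Type} [Fintype β] (p : Bool → β → ℝ)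
    (hp : ∀ x y, 0 ≤ p x y) :
    (∑ x : Bool, ∑ y : β, p x y) * bhat p ≤ bhat (xorConv p) :=
  calc (∑ x : Bool, ∑ y : β, p x y) * bhat p
      = ∑ y₁ : β, ∑ y₂ : β, (p false y₁ + p true y₁) * √((2 * p false y₂) * (2 * p true y₂)) := by
        rw [Fintype.sum_bool, add_comm, ← sum_add_distrib, bhat, sum_mul]
        simp only [mul_sum]
    _ ≤ ∑ y₁ : β, ∑ y₂ : β, √((p false y₁ * (2 * p false y₂) + p true y₁ * (2 * p true y₂)) *
          (p false y₁ * (2 * p true y₂) + p true y₁ * (2 * p false y₂))) :=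
        sum_le_sum fun y₁ _ => sum_le_sum fun _ _ => add_mul_sqrt_mul_le_sqrt (hp _ y₁) (hp _ y₁)
    _ = bhat (xorConv p) := by
        rw [bhat, Fintype.sum_prod_type]
        refine sum_congr rfl fun y₁ _ => sum_congr rfl fun y₂ _ => ?_
        simp only [xorConv, Fintype.sum_bool, Bool.false_xor, Bool.true_xor, Bool.not_false,
          Bool.not_true]
        congr 1
        ring

theorem bhat_le_bhat_plus_general {β : Type} [Fintype β] (p : Bool → β → ℝ)
    (hp : ∀ x y, 0 ≤ p x y)
    (hpsum : ∑ x : Bool, ∑ y : β, p x y = 1) :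
    bhat p ≤
      bhat (fun s (yy : β × β) => ∑ x₁ : Bool, p x₁ yy.1 * p (xor s x₁) yy.2) := by
  have h := sum_mul_bhat_le_bhat_xorConv p hp
  rwa [hpsum, one_mul] at h

/-- For i.i.d. pairs `(X₁,Y₁)`, `(X₂,Y₂)` with uniform binary inputs,
`Z(X₁+X₂ | Y₁, Y₂) ≥ Z(X₁|Y₁)`.  The joint pmf of `(X₁+X₂ ; (Y₁,Y₂))` is
`s, (y₁,y₂) ↦ ∑_{x₁} p x₁ y₁ * p (s xor x₁) y₂`. -/
theorem bhat_le_bhat_plus {β : Type} [Fintype β] (p : Bool → β → ℝ)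
    (hp : ∀ x y, 0 ≤ p x y)
    (hpsum : ∑ x : Bool, ∑ y : β, p x y = 1)
    (hpu : ∀ x : Bool, ∑ y : β, p x y = 1 / 2) :
    bhat p ≤
      bhat (fun s (yy : β × β) => ∑ x₁ : Bool, p x₁ yy.1 * p (xor s x₁) yy.2) :=
  bhat_le_bhat_plus_general p hp hpsum
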